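/- arXiv:1201.1728 — 3 statements merged into one kernel-verified Lean document; each statement's English description precedes it below -/
import Mathlib

section
/- For every integer n ≥ 2 and every i ∈ {0,1,…,n}, every arc of the star digraph ST⃗_{n+1} having both endpoints in S_i = {σ ∈ Alt_{n+1} : σ(0) = i or σ(1) = i} goes from a vertex σ with σ(0) = i to a vertex τ with τ(1) = i; in particular, in the subdigraph induced on S_i every vertex σ with σ(0) = i is a source, every vertex τ with τ(1) = i is a sink, and the two sets {σ : σ(0) = i} and {τ : τ(1) = i} are each stable (no arcs between two of their own vertices). Moreover, the underlying undirected graph of the subdigraph induced on S_i is isomorphic to the star graph ST_n. -/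
/-- The 3-cycle `gᵢ` determined by `gᵢ 0 = i`, `gᵢ i = 1`, `gᵢ 1 = 0`. -/
def gcyc {m : ℕ} [NeZero m] (i : Fin m) : Equiv.Perm (Fin m) :=
  Equiv.swap 1 i * Equiv.swap 0 1

/-- Vertices of the star digraph `ST⃗_m`: the even permutations of `{0, …, m-1}`. -/
abbrev StarVertex (m : ℕ) := {σ : Equiv.Perm (Fin m) // σ ∈ alternatingGroup (Fin m)}

/-- The arc relation of the star digraph `ST⃗_m`: there is an arc from `σ` to `σ ∘ gᵢ`
for each `i ∈ {2, …, m-1}`. -/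
def starArc {m : ℕ} [NeZero m] (σ τ : StarVertex m) : Prop :=
  ∃ i : Fin m, 2 ≤ i.val ∧ (τ : Equiv.Perm (Fin m)) = (σ : Equiv.Perm (Fin m)) * gcyc i

/-- The set `S_i = {σ ∈ Alt_m : σ 0 = i or σ 1 = i}`. -/
def Sset (m : ℕ) [NeZero m] (i : Fin m) : Set (StarVertex m) :=
  {σ | (σ : Equiv.Perm (Fin m)) 0 = i ∨ (σ : Equiv.Perm (Fin m)) 1 = i}

/-- The adjacency relation of the (undirected) star graph `ST_m`: `σ` is adjacent to
`σ ∘ (0 i)` for each `i ∈ {1, …, m-1}`. -/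
def starAdj {m : ℕ} [NeZero m] (σ τ : Equiv.Perm (Fin m)) : Prop :=
  ∃ i : Fin m, 1 ≤ i.val ∧ τ = σ * Equiv.swap 0 i

/-!
An arc `σ → σ * gⱼ` satisfies `(σ * gⱼ) 1 = σ 0` and `(σ * gⱼ) 0 = σ j ∉ {σ 0, σ 1}`, which
forces every arc inside `S_i` to run from `{σ 0 = i}` to `{τ 1 = i}`.

For the isomorphism, send `σ ∈ S_i` to `σ` if `σ 0 = i` and to `σ * (0 1)` otherwise. This is a
bijection onto the permutations `π` with `π 0 = i` (parity decides which of `π`, `π * (0 1)` is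
even), and since `gⱼ = (1 j) * (0 1)`, the arcs become exactly the pairs `π, π * (1 j)` with
`j ≥ 2`. Deleting the fixed position `0` (`Equiv.Perm.decomposeFin`) identifies these permutations
with `Perm (Fin (n + 2))` and the swaps `(1 j)` with the star generators `(0 j')`, `j' ≥ 1`.
-/

open Equiv Equiv.Perm

lemma gcyc_apply_zero {m : ℕ} [NeZero m] (j : Fin m) : gcyc j 0 = j := by
  simp [gcyc]

lemma gcyc_eq_swap_mul_swap {m : ℕ} [NeZero m] (j : Fin m) : gcyc j = swap 1 j * swap 0 1 :=
  rfl

lemma gcyc_apply_one {n : ℕ} {j : Fin (n + 2)} (hj : 2 ≤ j.val) : gcyc j 1 = 0 := by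
  have h0j : (0 : Fin (n + 2)) ≠ j := by rw [Ne, Fin.ext_iff, Fin.val_zero]; omega
  simp [gcyc, swap_apply_of_ne_of_ne zero_ne_one h0j]

section Arcs

variable {n : ℕ} {i : Fin (n + 2)} {σ τ : StarVertex (n + 2)}

lemma starArc.apply_one (h : starArc σ τ) : τ.1 1 = σ.1 0 := by
  obtain ⟨j, hj, e⟩ := h
  rw [e, mul_apply, gcyc_apply_one hj]

lemma starArc.apply_zero_ne (h : starArc σ τ) : τ.1 0 ≠ σ.1 1 := by
  obtain ⟨j, hj, e⟩ := h
  have hj1 : j ≠ 1 := by rw [Ne, Fin.ext_iff, Fin.val_one]; omega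
  rw [e, mul_apply, gcyc_apply_zero]
  exact σ.1.injective.ne hj1

lemma starArc.apply_eq_of_mem_Sset (hσ : σ ∈ Sset (n + 2) i) (hτ : τ ∈ Sset (n + 2) i)
    (h : starArc σ τ) : σ.1 0 = i ∧ τ.1 1 = i := by
  suffices hσ0 : σ.1 0 = i from ⟨hσ0, h.apply_one.trans hσ0⟩
  refine hσ.resolve_right fun hσ1 => ?_
  rcases hτ with hτ0 | hτ1
  · exact h.apply_zero_ne (hτ0.trans hσ1.symm)
  · exact zero_ne_one (σ.1.injective (h.apply_one.symm.trans (hτ1.trans hσ1.symm)))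

end Arcs

section Fiber

variable {n : ℕ}

abbrev ZeroFiber (m : ℕ) [NeZero m] (i : Fin m) := {π : Perm (Fin m) // π 0 = i}

def swapOneAdj {m : ℕ} [NeZero m] (π ρ : Perm (Fin m)) : Prop :=
  ∃ k : Fin m, 2 ≤ k.val ∧ ρ = π * swap 1 k

lemma swapOneAdj.symm {m : ℕ} [NeZero m] {π ρ : Perm (Fin m)} (h : swapOneAdj π ρ) :
    swapOneAdj ρ π := by
  obtain ⟨k, hk, rfl⟩ := h
  exact ⟨k, hk, (mul_swap_mul_self _ _ _).symm⟩

def zeroFiberEquivPerm (i : Fin (n + 2)) : ZeroFiber (n + 2) i ≃ Perm (Fin (n + 1)) where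
  toFun π := (decomposeFin π.1).2
  invFun g := ⟨decomposeFin.symm (i, g), decomposeFin_symm_apply_zero i g⟩
  left_inv := by
    rintro ⟨π, rfl⟩
    have hfst : (decomposeFin π).1 = π 0 := by
      conv_rhs => rw [← decomposeFin.symm_apply_apply π]
      exact (decomposeFin_symm_apply_zero _ _).symm
    ext1
    simp only [← hfst, Prod.mk.eta, Equiv.symm_apply_apply]
  right_inv g := by simp

lemma decomposeFin_symm_mul_swap (p : Fin (n + 2)) (g : Perm (Fin (n + 1))) (j : Fin (n + 1)) :
    decomposeFin.symm (p, g * swap 0 j) = decomposeFin.symm (p, g) * swap 1 j.succ := by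
  ext x
  refine Fin.cases ?_ (fun k => ?_) x
  · rw [mul_apply, swap_apply_of_ne_of_ne zero_ne_one (Fin.succ_ne_zero j).symm]
    simp only [decomposeFin_symm_apply_zero]
  · rw [mul_apply, ← Fin.succ_zero_eq_one, (Fin.succ_injective _).swap_apply]
    simp only [decomposeFin_symm_apply_succ, mul_apply]

lemma starAdj_zeroFiberEquivPerm_iff (i : Fin (n + 2)) (π ρ : ZeroFiber (n + 2) i) :
    starAdj (zeroFiberEquivPerm i π) (zeroFiberEquivPerm i ρ) ↔ swapOneAdj π.1 ρ.1 := by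
  obtain ⟨g, rfl⟩ := (zeroFiberEquivPerm i).symm.surjective π
  obtain ⟨h, rfl⟩ := (zeroFiberEquivPerm i).symm.surjective ρ
  simp only [Equiv.apply_symm_apply]
  constructor
  · rintro ⟨j, hj, rfl⟩
    exact ⟨j.succ, by rw [Fin.val_succ]; omega, decomposeFin_symm_mul_swap i g j⟩
  · rintro ⟨k, hk, e⟩
    obtain ⟨j, rfl⟩ := Fin.exists_succ_eq.2 (show k ≠ 0 by rintro rfl; simp at hk)
    rw [Fin.val_succ] at hk
    refine ⟨j, by omega, (zeroFiberEquivPerm i).symm.injective (Subtype.ext ?_)⟩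
    exact e.trans (decomposeFin_symm_mul_swap i g j).symm

end Fiber

section SsetFiber

variable {n : ℕ} {i : Fin (n + 2)}

def fiberRep (i : Fin (n + 2)) (σ : Perm (Fin (n + 2))) : Perm (Fin (n + 2)) :=
  if σ 0 = i then σ else σ * swap 0 1

def evenRep (π : Perm (Fin (n + 2))) : Perm (Fin (n + 2)) :=
  if sign π = 1 then π else π * swap 0 1

lemma fiberRep_apply_zero {σ : Perm (Fin (n + 2))} (hσ : σ 0 = i ∨ σ 1 = i) :
    fiberRep i σ 0 = i := by
  unfold fiberRep
  split_ifs with h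
  · exact h
  · rw [mul_apply, swap_apply_left, hσ.resolve_left h]

lemma sign_fiberRep {σ : Perm (Fin (n + 2))} (hσ : sign σ = 1) :
    sign (fiberRep i σ) = if σ 0 = i then 1 else -1 := by
  unfold fiberRep
  split_ifs <;> simp [hσ]

lemma sign_evenRep (π : Perm (Fin (n + 2))) : sign (evenRep π) = 1 := by
  unfold evenRep
  split_ifs with h
  · exact h
  · simp [(Int.units_eq_one_or _).resolve_left h]

lemma evenRep_apply_zero_or_apply_one {π : Perm (Fin (n + 2))} (hπ : π 0 = i) :
    evenRep π 0 = i ∨ evenRep π 1 = i := by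
  unfold evenRep
  split_ifs
  · exact .inl hπ
  · exact .inr (by rw [mul_apply, swap_apply_right, hπ])

def ssetEquivZeroFiber (i : Fin (n + 2)) : Sset (n + 2) i ≃ ZeroFiber (n + 2) i where
  toFun σ := ⟨fiberRep i σ.1.1, fiberRep_apply_zero σ.2⟩
  invFun π := ⟨⟨evenRep π.1, mem_alternatingGroup.2 (sign_evenRep _)⟩,
    evenRep_apply_zero_or_apply_one π.2⟩
  left_inv := by
    rintro ⟨⟨σ, hσ⟩, hσi⟩
    rw [mem_alternatingGroup] at hσ
    ext1; ext1
    by_cases h : σ 0 = i <;> simp [fiberRep, evenRep, h, hσ]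
  right_inv := by
    rintro ⟨π, hπ⟩
    ext1
    have h1 : π 1 ≠ i := hπ ▸ π.injective.ne one_ne_zero
    by_cases h : sign π = 1 <;> simp [fiberRep, evenRep, h, hπ, h1]

lemma starArc_iff_swapOneAdj_fiberRep {a b : StarVertex (n + 2)} (ha : a.1 0 = i)
    (hb : b.1 0 ≠ i) : starArc a b ↔ swapOneAdj (fiberRep i a.1) (fiberRep i b.1) := by
  simp only [starArc, swapOneAdj, fiberRep, if_pos ha, if_neg hb, gcyc_eq_swap_mul_swap,
    ← mul_assoc]
  refine exists_congr fun k => and_congr_right fun _ => ⟨fun e => ?_, fun e => ?_⟩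
  · rw [e, mul_swap_mul_self]
  · rw [← e, mul_swap_mul_self]

lemma apply_zero_eq_iff_of_swapOneAdj_fiberRep {a b : StarVertex (n + 2)}
    (h : swapOneAdj (fiberRep i a.1) (fiberRep i b.1)) : a.1 0 = i ↔ b.1 0 ≠ i := by
  obtain ⟨k, hk, e⟩ := h
  have h1k : (1 : Fin (n + 2)) ≠ k := by rw [Ne, Fin.ext_iff, Fin.val_one]; omega
  have hsign := congrArg sign e
  rw [Perm.sign_mul, sign_swap h1k, sign_fiberRep (mem_alternatingGroup.1 a.2),
    sign_fiberRep (mem_alternatingGroup.1 b.2)] at hsign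
  by_cases ha : a.1 0 = i <;> by_cases hb : b.1 0 = i <;> simp [ha, hb] at hsign ⊢

lemma starArc_or_starArc_iff_swapOneAdj (a b : Sset (n + 2) i) :
    (starArc a.1 b.1 ∨ starArc b.1 a.1) ↔
      swapOneAdj (ssetEquivZeroFiber i a).1 (ssetEquivZeroFiber i b).1 := by
  change _ ↔ swapOneAdj (fiberRep i a.1.1) (fiberRep i b.1.1)
  have orient {u v : Sset (n + 2) i} (h : starArc u.1 v.1) : u.1.1 0 = i ∧ v.1.1 0 ≠ i := by
    obtain ⟨hu, hv⟩ := h.apply_eq_of_mem_Sset u.2 v.2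
    exact ⟨hu, fun hv0 => zero_ne_one (v.1.1.injective (hv0.trans hv.symm))⟩
  constructor
  · rintro (h | h)
    · exact (starArc_iff_swapOneAdj_fiberRep (orient h).1 (orient h).2).1 h
    · exact ((starArc_iff_swapOneAdj_fiberRep (orient h).1 (orient h).2).1 h).symm
  · intro h
    have hiff := apply_zero_eq_iff_of_swapOneAdj_fiberRep h
    by_cases ha : a.1.1 0 = i
    · exact .inl ((starArc_iff_swapOneAdj_fiberRep ha (hiff.1 ha)).2 h)
    · exact .inr ((starArc_iff_swapOneAdj_fiberRep (not_not.1 (mt hiff.2 ha)) ha).2 h.symm)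

end SsetFiber

/-- For every integer `n ≥ 2` (here written `n + 2`) and every `i ∈ {0, …, n}`:
every arc of `ST⃗_{n+1}` with both endpoints in `S_i` goes from a vertex `σ` with `σ 0 = i`
to a vertex `τ` with `τ 1 = i`; in the subdigraph induced on `S_i` every vertex `σ` with
`σ 0 = i` is a source and every vertex `τ` with `τ 1 = i` is a sink; the two parts
`{σ : σ 0 = i}` and `{τ : τ 1 = i}` are each stable; and the underlying undirected graph of
the subdigraph induced on `S_i` is isomorphic to the star graph `ST_n`. -/
theorem stmt2 (n : ℕ) (i : Fin (n + 3)) :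
    (∀ σ τ : StarVertex (n + 3), σ ∈ Sset (n + 3) i → τ ∈ Sset (n + 3) i → starArc σ τ →
        (σ : Equiv.Perm (Fin (n + 3))) 0 = i ∧ (τ : Equiv.Perm (Fin (n + 3))) 1 = i) ∧
    (∀ σ : StarVertex (n + 3), σ ∈ Sset (n + 3) i → (σ : Equiv.Perm (Fin (n + 3))) 0 = i →
        ∀ u ∈ Sset (n + 3) i, ¬ starArc u σ) ∧
    (∀ τ : StarVertex (n + 3), τ ∈ Sset (n + 3) i → (τ : Equiv.Perm (Fin (n + 3))) 1 = i →
        ∀ u ∈ Sset (n + 3) i, ¬ starArc τ u) ∧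
    (∀ σ τ : StarVertex (n + 3),
        (σ : Equiv.Perm (Fin (n + 3))) 0 = i → (τ : Equiv.Perm (Fin (n + 3))) 0 = i →
        ¬ starArc σ τ) ∧
    (∀ σ τ : StarVertex (n + 3),
        (σ : Equiv.Perm (Fin (n + 3))) 1 = i → (τ : Equiv.Perm (Fin (n + 3))) 1 = i →
        ¬ starArc σ τ) ∧
    (∃ f : ↥(Sset (n + 3) i) ≃ Equiv.Perm (Fin (n + 2)),
      ∀ a b : ↥(Sset (n + 3) i),
        (starArc a.1 b.1 ∨ starArc b.1 a.1) ↔ starAdj (f a) (f b)) := by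
  refine ⟨fun σ τ hσ hτ h => h.apply_eq_of_mem_Sset hσ hτ, ?_, ?_, ?_, ?_, ?_⟩
  · intro σ hσ hσ0 u hu h
    exact zero_ne_one (σ.1.injective (hσ0.trans (h.apply_eq_of_mem_Sset hu hσ).2.symm))
  · intro τ hτ hτ1 u hu h
    exact zero_ne_one (τ.1.injective ((h.apply_eq_of_mem_Sset hτ hu).1.trans hτ1.symm))
  · intro σ τ hσ0 hτ0 h
    exact zero_ne_one (τ.1.injective (hτ0.trans (h.apply_one.trans hσ0).symm))
  · intro σ τ hσ1 hτ1 h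
    exact zero_ne_one (σ.1.injective ((h.apply_one.symm.trans hτ1).trans hσ1.symm))
  · exact ⟨(ssetEquivZeroFiber i).trans (zeroFiberEquivPerm i), fun a b =>
      (starArc_or_starArc_iff_swapOneAdj a b).trans (starAdj_zeroFiberEquivPerm_iff i _ _).symm⟩
end

section
/- Let n ≥ 2, i ∈ {0,1,…,n} and j ∈ {2,…,n}. The subdigraph of the star digraph ST⃗_{n+1} induced on V_{i,j} = {σ ∈ Alt_{n+1} : σ(j) = i} is isomorphic (as a digraph) to ST⃗_n when n − i + j is even, and is isomorphic to the reverse digraph of ST⃗_n (the digraph obtained from ST⃗_n by reversing every arc) when n − i + j is odd. -/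
/-- The set `V_{i,j} = {σ ∈ Alt_m : σ j = i}`. -/
def Vset (m : ℕ) (i j : Fin m) : Set (StarVertex m) :=
  {σ | (σ : Equiv.Perm (Fin m)) j = i}

/-! `V_{i,j}` is a left coset `a₀ · Stab(j)` of the stabiliser of `j` in `Alt_{n+1}`, and left
multiplication commutes with the right multiplications `σ ↦ σ gₖ` that define the arcs.
Extending permutations along `j.succAbove` identifies `Alt_n` with that stabiliser; since `j ≥ 2`
the extension fixes `0` and `1`, so it sends `gₖ` to `g_{j.succAbove k}`, and the only generator
leading out of the coset is `g_j`. Hence `V_{i,j}` induces a copy of `ST⃗_n`. Conjugation by the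
transposition `(0 1)` inverts every `gₖ`, so `ST⃗_n` is also isomorphic to its reverse, whatever
the parity of `n - i + j`. -/

open Equiv Equiv.Perm

lemma Equiv.Perm.extendDomain_swap {α β : Type*} [DecidableEq α] [DecidableEq β] {p : β → Prop}
    [DecidablePred p] (f : α ≃ Subtype p) (a b : α) :
    (swap a b).extendDomain f = swap (f a : β) (f b) := by
  ext x
  by_cases hx : p x
  · obtain ⟨y, rfl⟩ : ∃ y, (f y : β) = x := ⟨f.symm ⟨x, hx⟩, by simp⟩
    rw [extendDomain_apply_image]
    exact ((Subtype.val_injective.comp f.injective).swap_apply a b y).symm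
  · have hne : ∀ c, x ≠ f c := fun c h => hx (h ▸ (f c).2)
    rw [extendDomain_apply_not_subtype _ _ hx, swap_apply_of_ne_of_ne (hne a) (hne b)]

lemma Equiv.Perm.exists_extendDomain_eq {α β : Type*} {p : β → Prop} [DecidablePred p]
    (f : α ≃ Subtype p) {D : Perm β} (hD : ∀ x, ¬p x → D x = x) :
    ∃ ρ : Perm α, ρ.extendDomain f = D := by
  set g := (Perm.subtypeEquivSubtypePerm p).symm ⟨D, hD⟩
  refine ⟨f.permCongr.symm g, ?_⟩
  ext x
  by_cases hx : p x
  · obtain ⟨y, rfl⟩ : ∃ y, (f y : β) = x := ⟨f.symm ⟨x, hx⟩, by simp⟩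
    simp [extendDomain_apply_image, g]
  · rw [extendDomain_apply_not_subtype _ _ hx, hD x hx]

section ExtendDomain

variable {m : ℕ} {j : Fin (m + 1)} (ρ : Perm (Fin m))

@[simp]
lemma extendDomain_finSuccAboveEquiv_apply_self : ρ.extendDomain (finSuccAboveEquiv j) j = j :=
  extendDomain_apply_not_subtype _ _ (not_not.2 rfl)

@[simp]
lemma extendDomain_finSuccAboveEquiv_apply_succAbove (x : Fin m) :
    ρ.extendDomain (finSuccAboveEquiv j) (j.succAbove x) = j.succAbove (ρ x) := by
  simpa [finSuccAboveEquiv_apply] using extendDomain_apply_image ρ (finSuccAboveEquiv j) x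

end ExtendDomain

section SuccAbove

variable {m : ℕ} {j : Fin (m + 3)} (hj : 2 ≤ j.val)
include hj

lemma Fin.succAbove_zero_of_two_le : j.succAbove 0 = 0 :=
  Fin.succAbove_of_castSucc_lt _ _ (by rw [Fin.lt_def, Fin.val_castSucc, Fin.val_zero]; omega)

lemma Fin.succAbove_one_of_two_le : j.succAbove 1 = 1 :=
  Fin.succAbove_of_castSucc_lt _ _ (by rw [Fin.lt_def, Fin.val_castSucc, Fin.val_one]; omega)

lemma Fin.two_le_succAbove_iff (k : Fin (m + 2)) : 2 ≤ (j.succAbove k).val ↔ 2 ≤ k.val := by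
  unfold Fin.succAbove
  split_ifs <;> simp_all [Fin.lt_def]; omega

end SuccAbove

section Gcyc

variable {m : ℕ}

lemma swap_mul_gcyc_mul_swap [NeZero m] (k : Fin m) :
    swap 0 1 * gcyc k * swap 0 1 = (gcyc k)⁻¹ := by
  simp [gcyc, mul_assoc, mul_inv_rev, swap_inv]

lemma gcyc_apply_self {k : Fin (m + 2)} (hk : 2 ≤ k.val) : gcyc k k = 1 := by
  have hk0 : k ≠ 0 := by rintro rfl; simp at hk
  have hk1 : k ≠ 1 := by rintro rfl; simp at hk
  simp [gcyc, swap_apply_of_ne_of_ne hk0 hk1]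

variable {j : Fin (m + 3)} (hj : 2 ≤ j.val)
include hj

lemma extendDomain_gcyc (k : Fin (m + 2)) :
    (gcyc k).extendDomain (finSuccAboveEquiv j) = gcyc (j.succAbove k) := by
  simp only [gcyc, ← extendDomain_mul, extendDomain_swap, finSuccAboveEquiv_apply,
    Fin.succAbove_zero_of_two_le hj, Fin.succAbove_one_of_two_le hj]

lemma exists_extendDomain_eq_mul_gcyc_iff {ρ ρ' : Perm (Fin (m + 2))} :
    (∃ K : Fin (m + 3), 2 ≤ K.val ∧
      ρ'.extendDomain (finSuccAboveEquiv j) = ρ.extendDomain (finSuccAboveEquiv j) * gcyc K) ↔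
    ∃ k : Fin (m + 2), 2 ≤ k.val ∧ ρ' = ρ * gcyc k := by
  constructor
  · rintro ⟨K, hK, h⟩
    have hKj : K ≠ j := by
      rintro rfl
      have hfix := congrArg (· K) h
      simp only [Perm.mul_apply, gcyc_apply_self hK, extendDomain_finSuccAboveEquiv_apply_self,
        ← Fin.succAbove_one_of_two_le hj, extendDomain_finSuccAboveEquiv_apply_succAbove] at hfix
      exact Fin.succAbove_ne _ _ hfix.symm
    obtain ⟨k, rfl⟩ := Fin.exists_succAbove_eq hKj
    refine ⟨k, (Fin.two_le_succAbove_iff hj k).1 hK,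
      extendDomainHom_injective (finSuccAboveEquiv j) ?_⟩
    simp only [extendDomainHom_apply, ← extendDomain_mul, extendDomain_gcyc hj, h]
  · rintro ⟨k, hk, rfl⟩
    exact ⟨j.succAbove k, (Fin.two_le_succAbove_iff hj k).2 hk, by
      rw [← extendDomain_gcyc hj, extendDomain_mul]⟩

end Gcyc

section Vset

variable {m : ℕ} {i j : Fin (m + 3)}

lemma vset_nonempty (hj : 2 ≤ j.val) : (Vset (m + 3) i j).Nonempty := by
  by_cases hij : i = j
  · exact ⟨⟨1, one_mem _⟩, hij ▸ rfl⟩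
  have hj0 : j ≠ 0 := by rintro rfl; simp at hj
  have hj1 : j ≠ 1 := by rintro rfl; simp at hj
  refine ⟨⟨swap i j * swap 0 1, ?_⟩, ?_⟩
  · simp [mem_alternatingGroup, sign_swap hij]
  · simp [Vset, swap_apply_of_ne_of_ne hj0 hj1]

def vsetMap (a₀ : Vset (m + 3) i j) (ρ : StarVertex (m + 2)) : Vset (m + 3) i j :=
  ⟨⟨a₀.1.1 * ρ.1.extendDomain (finSuccAboveEquiv j),
    mul_mem a₀.1.2 (by rw [mem_alternatingGroup, sign_extendDomain]; exact ρ.2)⟩, by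
    simpa [Vset] using a₀.2⟩

variable (a₀ : Vset (m + 3) i j)

lemma vsetMap_bijective : Function.Bijective (vsetMap a₀) := by
  refine ⟨fun ρ ρ' h => Subtype.ext (extendDomainHom_injective (finSuccAboveEquiv j) ?_),
    fun σ => ?_⟩
  · simpa [vsetMap] using congrArg (fun a => a.1.1) h
  · have hfix : ∀ x, ¬x ≠ j → (a₀.1.1⁻¹ * σ.1.1) x = x := by
      intro x hx
      rw [not_not.1 hx, mul_apply, show σ.1.1 j = i from σ.2, inv_eq_iff_eq]
      exact a₀.2.symm
    obtain ⟨ρ, hρ⟩ := exists_extendDomain_eq (finSuccAboveEquiv j) hfix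
    have hρ_even : ρ ∈ alternatingGroup (Fin (m + 2)) := by
      rw [mem_alternatingGroup, ← sign_extendDomain ρ (finSuccAboveEquiv j), hρ, map_mul,
        map_inv, mem_alternatingGroup.1 a₀.1.2, mem_alternatingGroup.1 σ.1.2, inv_one, one_mul]
    exact ⟨⟨ρ, hρ_even⟩, Subtype.ext (Subtype.ext (by simp [vsetMap, hρ]))⟩

lemma starArc_vsetMap (hj : 2 ≤ j.val) (ρ ρ' : StarVertex (m + 2)) :
    starArc (vsetMap a₀ ρ).1 (vsetMap a₀ ρ').1 ↔ starArc ρ ρ' := by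
  simp only [starArc, vsetMap, mul_assoc, mul_right_inj]
  exact exists_extendDomain_eq_mul_gcyc_iff hj

noncomputable def vsetEquiv : Vset (m + 3) i j ≃ StarVertex (m + 2) :=
  (Equiv.ofBijective _ (vsetMap_bijective a₀)).symm

lemma starArc_iff_starArc_vsetEquiv (hj : 2 ≤ j.val) (a b : Vset (m + 3) i j) :
    starArc a.1 b.1 ↔ starArc (vsetEquiv a₀ a) (vsetEquiv a₀ b) := by
  obtain ⟨ρ, rfl⟩ := (vsetEquiv a₀).symm.surjective a
  obtain ⟨ρ', rfl⟩ := (vsetEquiv a₀).symm.surjective b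
  simpa [vsetEquiv] using starArc_vsetMap a₀ hj ρ ρ'

end Vset

def starReverse (m : ℕ) [NeZero m] : StarVertex m ≃ StarVertex m :=
  (MulAut.conjNormal (swap (0 : Fin m) 1)).toEquiv

lemma starArc_starReverse {m : ℕ} [NeZero m] {σ τ : StarVertex m} :
    starArc (starReverse m σ) (starReverse m τ) ↔ starArc τ σ := by
  simp only [starArc, starReverse, MulEquiv.toEquiv_eq_coe, MulEquiv.coe_toEquiv,
    MulAut.conjNormal_apply, swap_inv]
  refine exists_congr fun k => and_congr_right fun _ => ?_
  have hconj : swap 0 1 * σ.1 * swap 0 1 * gcyc k = swap 0 1 * (σ.1 * (gcyc k)⁻¹) * swap 0 1 := by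
    rw [← swap_mul_gcyc_mul_swap]
    simp only [mul_assoc, swap_mul_self, mul_one]
  rw [hconj, mul_left_inj, mul_right_inj, eq_mul_inv_iff_mul_eq, eq_comm]

/-- For `n ≥ 2` (here written `n + 2`), `i ∈ {0, …, n}` and `j ∈ {2, …, n}`: the subdigraph
of `ST⃗_{n+1}` induced on `V_{i,j}` is isomorphic to `ST⃗_n` when `n - i + j` is even, and
isomorphic to the reverse of `ST⃗_n` when `n - i + j` is odd. -/
theorem stmt4 (n : ℕ) (i j : Fin (n + 3)) (hj : 2 ≤ j.val) :
    (Even ((n : ℤ) + 2 - (i : ℕ) + (j : ℕ)) →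
      ∃ f : ↥(Vset (n + 3) i j) ≃ StarVertex (n + 2),
        ∀ a b : ↥(Vset (n + 3) i j), starArc a.1 b.1 ↔ starArc (f a) (f b)) ∧
    (Odd ((n : ℤ) + 2 - (i : ℕ) + (j : ℕ)) →
      ∃ f : ↥(Vset (n + 3) i j) ≃ StarVertex (n + 2),
        ∀ a b : ↥(Vset (n + 3) i j), starArc a.1 b.1 ↔ starArc (f b) (f a)) := by
  obtain ⟨a₀, ha₀⟩ := vset_nonempty (i := i) hj
  have arc := starArc_iff_starArc_vsetEquiv ⟨a₀, ha₀⟩ hj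
  exact ⟨fun _ => ⟨vsetEquiv ⟨a₀, ha₀⟩, arc⟩,
    fun _ => ⟨(vsetEquiv ⟨a₀, ha₀⟩).trans (starReverse _),
      fun a b => (arc a b).trans starArc_starReverse.symm⟩⟩
end

section
/- For every integer n ≥ 3, the binary-star digraph BST⃗_n is isomorphic to the canonical bipartite double cover of the star digraph ST⃗_n, i.e. to the digraph on vertex set Alt_n × {0,1} having an arc from (σ, ε) to (τ, 1−ε) precisely when (σ, τ) is an arc of ST⃗_n. -/
/-- The arc relation of the binary-star digraph `BST⃗_m` on the symmetric group: an arc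
from `σ` to `σ ∘ (1 i)` for each even `σ` and each `i ∈ {2, …, m-1}`, and an arc from `σ`
to `σ ∘ (0 i)` for each odd `σ` and each `i ∈ {2, …, m-1}`. -/
def bstArc {m : ℕ} [NeZero m] (σ τ : Equiv.Perm (Fin m)) : Prop :=
  (σ ∈ alternatingGroup (Fin m) ∧ ∃ i : Fin m, 2 ≤ i.val ∧ τ = σ * Equiv.swap 1 i) ∨
  (σ ∉ alternatingGroup (Fin m) ∧ ∃ i : Fin m, 2 ≤ i.val ∧ τ = σ * Equiv.swap 0 i)

open Equiv Equiv.Perm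

section Parity

variable {α : Type*} [DecidableEq α] [Fintype α] {a b c : α}

theorem mul_swap_mem_alternatingGroup_iff (hab : a ≠ b) {σ : Perm α} :
    σ * swap a b ∈ alternatingGroup α ↔ σ ∉ alternatingGroup α := by
  rcases Int.units_eq_one_or (sign σ) with h | h <;>
    simp [mem_alternatingGroup, sign_swap hab, h]

def permEquivAlternatingGroupProd (hab : a ≠ b) :
    Perm α ≃ {σ : Perm α // σ ∈ alternatingGroup α} × ZMod 2 where
  toFun σ :=
    if h : sign σ = 1 then (⟨σ, mem_alternatingGroup.2 h⟩, 0)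
    else (⟨σ * swap a b, (mul_swap_mem_alternatingGroup_iff hab).2 (mt mem_alternatingGroup.1 h)⟩, 1)
  invFun p := if p.2 = 0 then p.1 else p.1 * swap a b
  left_inv σ := by
    by_cases h : sign σ = 1 <;> simp [h, mul_assoc]
  right_inv := by
    rintro ⟨⟨σ, hσ⟩, ε⟩
    obtain rfl | rfl : ε = 0 ∨ ε = 1 := by revert ε; decide
    · simp [mem_alternatingGroup.1 hσ]
    · simp [hab, mem_alternatingGroup.1 hσ, mul_assoc]

theorem permEquivAlternatingGroupProd_apply_of_mem (hab : a ≠ b) {σ : Perm α}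
    (h : σ ∈ alternatingGroup α) : permEquivAlternatingGroupProd hab σ = (⟨σ, h⟩, 0) :=
  dif_pos (mem_alternatingGroup.1 h)

theorem permEquivAlternatingGroupProd_apply_of_notMem (hab : a ≠ b) {σ : Perm α}
    (h : σ ∉ alternatingGroup α) :
    permEquivAlternatingGroupProd hab σ =
      (⟨σ * swap a b, (mul_swap_mem_alternatingGroup_iff hab).2 h⟩, 1) :=
  dif_neg (mt mem_alternatingGroup.2 h)

def mulSwapByParity (a b : α) (σ : Perm α) (c : α) : Perm α :=
  if sign σ = 1 then σ * swap b c else σ * swap a c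

theorem permEquivAlternatingGroupProd_mulSwapByParity (hab : a ≠ b) (hca : c ≠ a) (hcb : c ≠ b)
    (σ : Perm α) :
    let e := permEquivAlternatingGroupProd hab
    ((e (mulSwapByParity a b σ c)).1 : Perm α) = (e σ).1 * (swap b c * swap a b) ∧
      (e (mulSwapByParity a b σ c)).2 = 1 - (e σ).2 := by
  by_cases hσ : σ ∈ alternatingGroup α
  · have hτ : σ * swap b c ∉ alternatingGroup α :=
      (mul_swap_mem_alternatingGroup_iff hcb.symm).not_left.2 hσ
    simp [mulSwapByParity, mem_alternatingGroup.1 hσ, permEquivAlternatingGroupProd_apply_of_mem,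
      permEquivAlternatingGroupProd_apply_of_notMem, hσ, hτ, mul_assoc]
  · have hτ : σ * swap a c ∈ alternatingGroup α :=
      (mul_swap_mem_alternatingGroup_iff hca.symm).2 hσ
    have hconj : swap a b * (swap b c * swap a b) = swap a c := by
      rw [← mul_assoc, swap_comm a b, swap_comm b c, swap_mul_swap_mul_swap hcb hca, swap_comm]
    simp [mulSwapByParity, mt mem_alternatingGroup.2 hσ, permEquivAlternatingGroupProd_apply_of_mem,
      permEquivAlternatingGroupProd_apply_of_notMem, hσ, hτ, mul_assoc, hconj]

end Parity

theorem Fin.ne_zero_and_ne_one_of_two_le_val {m : ℕ} [NeZero m] {i : Fin m} (hi : 2 ≤ i.val) :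
    i ≠ 0 ∧ i ≠ 1 := by
  refine ⟨fun h => ?_, fun h => ?_⟩ <;> subst h
  · simp at hi
  · have := Nat.mod_le 1 m
    simp only [Fin.val_one'] at hi
    omega

theorem bstArc_iff_exists_mulSwapByParity {m : ℕ} [NeZero m] (σ τ : Perm (Fin m)) :
    bstArc σ τ ↔ ∃ i : Fin m, 2 ≤ i.val ∧ τ = mulSwapByParity 0 1 σ i := by
  by_cases hσ : σ ∈ alternatingGroup (Fin m)
  · simp [bstArc, mulSwapByParity, hσ, mem_alternatingGroup.1 hσ]
  · simp [bstArc, mulSwapByParity, hσ, mt mem_alternatingGroup.2 hσ]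

/-- For every `n ≥ 3` (here written `n + 3`), the binary-star digraph `BST⃗_n` is
isomorphic to the canonical bipartite double cover of `ST⃗_n`, i.e. to the digraph on
`Alt_n × {0,1}` with an arc from `(σ, ε)` to `(τ, 1 - ε)` exactly when `(σ, τ)` is an arc
of `ST⃗_n`. -/
theorem stmt15 (n : ℕ) :
    ∃ f : Equiv.Perm (Fin (n + 3)) ≃ StarVertex (n + 3) × ZMod 2,
      ∀ σ τ : Equiv.Perm (Fin (n + 3)),
        bstArc σ τ ↔ (starArc (f σ).1 (f τ).1 ∧ (f τ).2 = 1 - (f σ).2) := by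
  have h01 : (0 : Fin (n + 3)) ≠ 1 := by simp
  set e := permEquivAlternatingGroupProd h01
  have step (σ : Perm (Fin (n + 3))) {i : Fin (n + 3)} (hi : 2 ≤ i.val) :=
    permEquivAlternatingGroupProd_mulSwapByParity h01
      (Fin.ne_zero_and_ne_one_of_two_le_val hi).1 (Fin.ne_zero_and_ne_one_of_two_le_val hi).2 σ
  refine ⟨e, fun σ τ => ?_⟩
  rw [bstArc_iff_exists_mulSwapByParity, starArc]
  constructor
  · rintro ⟨i, hi, rfl⟩
    exact ⟨⟨i, hi, (step σ hi).1⟩, (step σ hi).2⟩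
  · rintro ⟨⟨i, hi, hfst⟩, hsnd⟩
    refine ⟨i, hi, e.injective (Prod.ext (Subtype.ext ?_) ?_)⟩
    · exact hfst.trans (step σ hi).1.symm
    · exact hsnd.trans (step σ hi).2.symm
end
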